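/- Consider the stochastic block model with parameters satisfying condition (C1). Then for every ε > 0, with probability tending to 1 as N → ∞ along multiples of M, all vertex degrees are positive and the matrix R := B − A' (with B := D^{−1/2} A D^{−1/2}) satisfies ‖R‖_∞ ≤ (√3 + ε)·(log N/γ_min)^{1/4}·(γ_max/γ_min)^{1/2}, where ‖R‖_∞ := max_v Σ_w |R_{v,w}| is the maximum absolute row sum. -/

import Mathlib

open MeasureTheory Matrix Filter Finset Real Topology ProbabilityTheory Kronecker
open scoped ENNReal NNReal

namespace SBM

noncomputable def eigsList {ι : Type*} [Fintype ι] [DecidableEq ι] (A : Matrix ι ι ℝ) : List ℝ :=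
  if h : A.IsHermitian then ((Finset.univ.val.map h.eigenvalues).sort (· ≤ ·)).reverse else []

/-- `eig A k` is the `k`-th largest eigenvalue (1-indexed, with multiplicity) of the
symmetric real matrix `A`. -/
noncomputable def eig {ι : Type*} [Fintype ι] [DecidableEq ι] (A : Matrix ι ι ℝ) (k : ℕ) : ℝ :=
  (eigsList A).getD (k - 1) 0

/-- Spectral norm of a symmetric matrix: largest absolute value of an eigenvalue. -/
noncomputable def specNorm {ι : Type*} [Fintype ι] [DecidableEq ι] (A : Matrix ι ι ℝ) : ℝ :=
  ((eigsList A).map (fun x => |x|)).foldr max 0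

noncomputable def vmin {M : ℕ} (f : Fin M → ℝ) : ℝ := sInf (Set.range f)
noncomputable def vmax {M : ℕ} (f : Fin M → ℝ) : ℝ := sSup (Set.range f)

/-- Vertex set of the stochastic block model: `M` blocks of size `n` each. -/
abbrev Vtx (M n : ℕ) := Fin M × Fin n

/-- Probability of an edge (or loop), depending on the blocks of its endpoints. -/
noncomputable def edgeProb (M n : ℕ) (p : Fin M → ℝ) (q : ℝ) : Sym2 (Vtx M n) → ℝ :=
  Sym2.lift ⟨fun v w => if v.1 = w.1 then p v.1 else q, by
    intro v w
    dsimp only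
    rcases eq_or_ne v.1 w.1 with h | h
    · rw [if_pos h, if_pos h.symm, h]
    · rw [if_neg h, if_neg (Ne.symm h)]⟩

/-- Bernoulli measure on `Bool` with success probability `r`. -/
noncomputable def bern (r : ℝ) : Measure Bool :=
  ENNReal.ofReal r • Measure.dirac true + ENNReal.ofReal (1 - r) • Measure.dirac false

/-- The stochastic block model measure: all unordered pairs (loops allowed) independent. -/
noncomputable def sbmMeasure (M n : ℕ) (p : Fin M → ℝ) (q : ℝ) :
    Measure (Sym2 (Vtx M n) → Bool) :=
  Measure.pi fun e => bern (edgeProb M n p q e)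

noncomputable def adj {M n : ℕ} (ω : Sym2 (Vtx M n) → Bool) : Matrix (Vtx M n) (Vtx M n) ℝ :=
  Matrix.of fun v w => if ω s(v, w) then 1 else 0

noncomputable def deg {M n : ℕ} (ω : Sym2 (Vtx M n) → Bool) (v : Vtx M n) : ℝ := ∑ w, adj ω v w

/-- Expected degree of a vertex in block `m`. -/
noncomputable def gam (M n : ℕ) (p : Fin M → ℝ) (q : ℝ) (m : Fin M) : ℝ :=
  (n : ℝ) * p m + ((M : ℝ) - 1) * (n : ℝ) * q

noncomputable def gmin (M n : ℕ) (p : Fin M → ℝ) (q : ℝ) : ℝ := vmin (gam M n p q)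
noncomputable def gmax (M n : ℕ) (p : Fin M → ℝ) (q : ℝ) : ℝ := vmax (gam M n p q)

noncomputable def sigmaSq (M : ℕ) (p : Fin M → ℝ) (q : ℝ) : ℝ :=
  (1 / M) * (vmax (fun m => p m * (1 - p m)) + ((M : ℝ) - 1) * q * (1 - q))

/-- The matrix of block transition probabilities. -/
noncomputable def PM (M : ℕ) (p : Fin M → ℝ) (q : ℝ) : Matrix (Fin M) (Fin M) ℝ :=
  Matrix.of fun i j => if i = j then p i else q

/-- The rescaled matrix of block transition probabilities `Γ^{-1/2} P_M Γ^{-1/2}`. -/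
noncomputable def PM' (M n : ℕ) (p : Fin M → ℝ) (q : ℝ) : Matrix (Fin M) (Fin M) ℝ :=
  Matrix.of fun i j => PM M p q i j / Real.sqrt (gam M n p q i * gam M n p q j)

/-- The rescaled adjacency matrix `(E D)^{-1/2} A (E D)^{-1/2}`. -/
noncomputable def Aprime (M n : ℕ) (p : Fin M → ℝ) (q : ℝ) (ω : Sym2 (Vtx M n) → Bool) :
    Matrix (Vtx M n) (Vtx M n) ℝ :=
  Matrix.of fun v w => adj ω v w / Real.sqrt (gam M n p q v.1 * gam M n p q w.1)

/-- The entrywise expectation of the rescaled adjacency matrix. -/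
noncomputable def EAprime (M n : ℕ) (p : Fin M → ℝ) (q : ℝ) : Matrix (Vtx M n) (Vtx M n) ℝ :=
  Matrix.of fun v w => edgeProb M n p q s(v, w) / Real.sqrt (gam M n p q v.1 * gam M n p q w.1)

/-- The symmetrically normalized adjacency matrix `D^{-1/2} A D^{-1/2}`. -/
noncomputable def Bmat {M n : ℕ} (ω : Sym2 (Vtx M n) → Bool) : Matrix (Vtx M n) (Vtx M n) ℝ :=
  Matrix.of fun v w => adj ω v w / Real.sqrt (deg ω v * deg ω w)

noncomputable def numEdges {M n : ℕ} (ω : Sym2 (Vtx M n) → Bool) : ℕ :=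
  (Finset.univ.filter fun e : Sym2 (Vtx M n) => ω e = true).card

noncomputable def numLoops {M n : ℕ} (ω : Sym2 (Vtx M n) → Bool) : ℕ :=
  (Finset.univ.filter fun v : Vtx M n => ω s(v, v) = true).card

/-- The realized simple graph (loops discarded). -/
def graphOf {M n : ℕ} (ω : Sym2 (Vtx M n) → Bool) : SimpleGraph (Vtx M n) where
  Adj v w := v ≠ w ∧ ω s(v, w) = true
  symm := by constructor; intro v w h; exact ⟨h.1.symm, by rw [Sym2.eq_swap]; exact h.2⟩
  loopless := by constructor; intro v h; exact h.1 rfl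

/-- Variance of the degree of a vertex in block `m`. -/
noncomputable def upsSq (M n : ℕ) (p : Fin M → ℝ) (q : ℝ) (m : Fin M) : ℝ :=
  (n : ℝ) * (p m * (1 - p m)) + ((M : ℝ) - 1) * (n : ℝ) * (q * (1 - q))

noncomputable def gbar (M n : ℕ) (p : Fin M → ℝ) (q : ℝ) : ℝ := (1 / M) * ∑ m, gam M n p q m
noncomputable def pbar (M : ℕ) (p : Fin M → ℝ) : ℝ := (1 / M) * ∑ m, p m
noncomputable def ubarSq (M n : ℕ) (p : Fin M → ℝ) (q : ℝ) : ℝ := (1 / M) * ∑ m, upsSq M n p q m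

/-- The invariant distribution `π_v = d_v / (2|E| - |L|)`. -/
noncomputable def piStat {M n : ℕ} (ω : Sym2 (Vtx M n) → Bool) (v : Vtx M n) : ℝ :=
  deg ω v / (2 * (numEdges ω : ℝ) - (numLoops ω : ℝ))

/-- The orthogonal projection onto the eigenvector `√π` of `B` (for the eigenvalue 1). -/
noncomputable def Pproj {M n : ℕ} (ω : Sym2 (Vtx M n) → Bool) : Matrix (Vtx M n) (Vtx M n) ℝ :=
  Matrix.of fun v w => Real.sqrt (piStat ω v) * Real.sqrt (piStat ω w)

/-- Basis-free form of `Σ_{k=2}^N u_{k,w}^2 / (1 - λ_k(B))`: on the event that the graph is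
connected (so that `λ_1(B) = 1` is simple with eigenvector `√π`), it equals the diagonal entry
at `w` of `(I - B + P)⁻¹ - P` where `P` is the projection onto `√π`. -/
noncomputable def spectralSum {M n : ℕ} (ω : Sym2 (Vtx M n) → Bool) (w : Vtx M n) : ℝ :=
  ((1 - Bmat ω + Pproj ω)⁻¹ - Pproj ω) w w

/-- The good event: all degrees positive and `λ_k(B) ≠ 1` for `k ≥ 2`. -/
def good (M n : ℕ) (ω : Sym2 (Vtx M n) → Bool) : Prop :=
  (∀ v, 0 < deg ω v) ∧ ∀ k, 2 ≤ k → k ≤ M * n → eig (Bmat ω) k ≠ 1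

open Classical in
/-- Spectral formula for the hitting time averaged over the starting vertex,
`H_w = ((2|E| - |L|)/d_w) Σ_{k=2}^N u_{k,w}^2/(1 - λ_k(B))`, set to `0` outside `good`. -/
noncomputable def Hitting {M n : ℕ} (ω : Sym2 (Vtx M n) → Bool) (w : Vtx M n) : ℝ :=
  if good M n ω then
    ((2 * (numEdges ω : ℝ) - (numLoops ω : ℝ)) / deg ω w) * spectralSum ω w
  else 0

open Classical in
/-- `Σ_{k=2}^N u_{k,w}^2/(1 - λ_k(B)) - 1`, set to `0` outside `good`. -/
noncomputable def spectralTerm {M n : ℕ} (ω : Sym2 (Vtx M n) → Bool) (w : Vtx M n) : ℝ :=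
  if good M n ω then spectralSum ω w - 1 else 0

/-- `u` is an orthonormal eigenbasis of `B(ω)`, with `u k` an eigenvector for the
`(k+1)`-st largest eigenvalue (so `u 0` corresponds to `λ_1`). -/
def eigBasis {M n : ℕ} (ω : Sym2 (Vtx M n) → Bool) (u : Fin (M * n) → Vtx M n → ℝ) : Prop :=
  (∀ k l, (u k) ⬝ᵥ (u l) = if k = l then 1 else 0) ∧
    ∀ k, (Bmat ω) *ᵥ (u k) = eig (Bmat ω) ((k : ℕ) + 1) • (u k)

/-- Standing assumptions on the parameters: `0 < p_m < 1` descending, `0 < q < 1`. -/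
def params (M : ℕ) (p : ℕ → Fin M → ℝ) (q : ℕ → ℝ) : Prop :=
  ∀ n : ℕ, (∀ m, 0 < p n m ∧ p n m < 1) ∧ (0 < q n ∧ q n < 1) ∧
    ∀ i j : Fin M, i ≤ j → p n j ≤ p n i

/-- Condition (C1). -/
noncomputable def condC1 (M : ℕ) (p : ℕ → Fin M → ℝ) (q : ℕ → ℝ) : Prop :=
  ∀ m : Fin M, Tendsto (fun n : ℕ =>
    ((M : ℝ) * Real.log (M * n) ^ 4 /
        ((M * n : ℝ) * p n m + (M * n : ℝ) * ((M : ℝ) - 1) * q n)) *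
      (gmax M n (p n) (q n) / gmin M n (p n) (q n)) ^ 2) atTop (𝓝 0)

/-- Condition (C2). -/
noncomputable def condC2 (M : ℕ) (p : ℕ → Fin M → ℝ) (q : ℕ → ℝ) : Prop :=
  Tendsto (fun n : ℕ => (((M : ℝ) - 1) * q n) ^ 2 /
    (((M : ℝ) * Real.log (M * n) / (M * n : ℝ)) ^ ((1 : ℝ)/4) *
      vmin (p n) ^ ((5 : ℝ)/4) * vmax (p n) ^ ((1 : ℝ)/2))) atTop atTop

/-- Condition (C1'). -/
noncomputable def condC1' (M : ℕ) (p : ℕ → Fin M → ℝ) (q : ℕ → ℝ) : Prop :=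
  ∀ m : Fin M, Tendsto (fun n : ℕ =>
    ((M : ℝ) * Real.log (M * n) ^ 4 /
        ((M * n : ℝ) * (p n m * (1 - p n m)) +
          (M * n : ℝ) * ((M : ℝ) - 1) * (q n * (1 - q n)))) *
      (vmax (p n) / vmin (p n)) ^ 2) atTop (𝓝 0)

/-!
Each degree `d_v` is a sum of independent Bernoulli variables with mean `γ_v := γ_{B(v)}`, so
its moment generating function is at most `exp (γ_v (e^t - 1))` and the Chernoff bound gives
`|d_v - γ_v| ≤ δ γ_v` for all `v` outside an event of probability at most
`2 N exp (-γ_min δ² / 4)`. On the complementary event, `R_{vw} = A_{vw} ((d_v d_w)^{-1/2} -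
(γ_v γ_w)^{-1/2})` has `|R_{vw}| ≤ δ / (1 - δ) · (γ_v γ_w)^{-1/2}` on every edge, and summing
over the at most `(1 + δ) γ_v` neighbours of `v` gives
`‖R‖_∞ ≤ δ (1 + δ) / (1 - δ) · (γ_max / γ_min)^{1/2} ≤ √3 δ (γ_max / γ_min)^{1/2}` once
`δ ≤ 1/4`. Take `δ = (log N / γ_min)^{1/4}`: condition (C1) forces `γ_min ≥ 256 log N`
eventually, so `γ_min δ² / 4 = (γ_min log N)^{1/2} / 4 ≥ 2 log N` and the exceptional event has
probability at most `2 / N`.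
-/

section Chernoff

variable {Ω : Type*} {mΩ : MeasurableSpace Ω} {μ : Measure Ω} [IsFiniteMeasure μ] {X : Ω → ℝ}
  {γ δ : ℝ}

lemma exp_sub_one_le_add_sq {t : ℝ} (ht : |t| ≤ 1) : exp t - 1 ≤ t + t ^ 2 := by
  linarith [(abs_le.1 (abs_exp_sub_one_sub_id_le ht)).2]

lemma measureReal_ge_le_of_mgf_le (hγ : 0 ≤ γ) (hδ0 : 0 ≤ δ) (hδ2 : δ ≤ 2)
    (h_int : ∀ t, Integrable (fun ω => exp (t * X ω)) μ)
    (h_mgf : ∀ t, mgf X μ t ≤ exp (γ * (exp t - 1))) :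
    μ.real {ω | (1 + δ) * γ ≤ X ω} ≤ exp (-(γ * δ ^ 2 / 4)) := by
  have hexp := exp_sub_one_le_add_sq (t := δ / 2) (by rw [abs_of_nonneg] <;> linarith)
  calc μ.real {ω | (1 + δ) * γ ≤ X ω}
      ≤ exp (-(δ / 2) * ((1 + δ) * γ)) * mgf X μ (δ / 2) :=
        measure_ge_le_exp_mul_mgf _ (by linarith) (h_int _)
    _ ≤ exp (-(δ / 2) * ((1 + δ) * γ)) * exp (γ * (exp (δ / 2) - 1)) := by gcongr; exact h_mgf _
    _ ≤ exp (-(γ * δ ^ 2 / 4)) := by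
        rw [← exp_add]
        gcongr
        nlinarith [mul_le_mul_of_nonneg_left hexp hγ]

lemma measureReal_le_le_of_mgf_le (hγ : 0 ≤ γ) (hδ0 : 0 ≤ δ) (hδ2 : δ ≤ 2)
    (h_int : ∀ t, Integrable (fun ω => exp (t * X ω)) μ)
    (h_mgf : ∀ t, mgf X μ t ≤ exp (γ * (exp t - 1))) :
    μ.real {ω | X ω ≤ (1 - δ) * γ} ≤ exp (-(γ * δ ^ 2 / 4)) := by
  have hexp := exp_sub_one_le_add_sq (t := -(δ / 2)) (by rw [abs_neg, abs_of_nonneg] <;> linarith)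
  calc μ.real {ω | X ω ≤ (1 - δ) * γ}
      ≤ exp (-(-(δ / 2)) * ((1 - δ) * γ)) * mgf X μ (-(δ / 2)) :=
        measure_le_le_exp_mul_mgf _ (by linarith) (h_int _)
    _ ≤ exp (-(-(δ / 2)) * ((1 - δ) * γ)) * exp (γ * (exp (-(δ / 2)) - 1)) := by
        gcongr; exact h_mgf _
    _ ≤ exp (-(γ * δ ^ 2 / 4)) := by
        rw [← exp_add]
        gcongr
        nlinarith [mul_le_mul_of_nonneg_left hexp hγ]

lemma measureReal_abs_sub_gt_le_of_mgf_le (hγ : 0 ≤ γ) (hδ0 : 0 ≤ δ) (hδ2 : δ ≤ 2)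
    (h_int : ∀ t, Integrable (fun ω => exp (t * X ω)) μ)
    (h_mgf : ∀ t, mgf X μ t ≤ exp (γ * (exp t - 1))) :
    μ.real {ω | δ * γ < |X ω - γ|} ≤ 2 * exp (-(γ * δ ^ 2 / 4)) := by
  have hsub : {ω | δ * γ < |X ω - γ|} ⊆ {ω | (1 + δ) * γ ≤ X ω} ∪ {ω | X ω ≤ (1 - δ) * γ} := by
    intro ω hω
    rcases lt_abs.1 hω.out with h | h
    · exact Or.inl (show (1 + δ) * γ ≤ X ω by linarith)
    · exact Or.inr (show X ω ≤ (1 - δ) * γ by linarith)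
  calc μ.real {ω | δ * γ < |X ω - γ|}
      ≤ μ.real {ω | (1 + δ) * γ ≤ X ω} + μ.real {ω | X ω ≤ (1 - δ) * γ} :=
        (measureReal_mono hsub).trans (measureReal_union_le _ _)
    _ ≤ 2 * exp (-(γ * δ ^ 2 / 4)) := by
        linarith [measureReal_ge_le_of_mgf_le hγ hδ0 hδ2 h_int h_mgf,
          measureReal_le_le_of_mgf_le hγ hδ0 hδ2 h_int h_mgf]

end Chernoff

lemma tendsto_measure_of_one_sub_le {Ω : ℕ → Type*} [∀ n, MeasurableSpace (Ω n)]
    {μ : ∀ n, Measure (Ω n)} (hμ : ∀ n, IsProbabilityMeasure (μ n)) {s : ∀ n, Set (Ω n)}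
    {u : ℕ → ℝ} (hu : Tendsto u atTop (𝓝 0)) (h : ∀ᶠ n in atTop, 1 - u n ≤ (μ n).real (s n)) :
    Tendsto (fun n => μ n (s n)) atTop (𝓝 1) := by
  have hreal : Tendsto (fun n => (μ n).real (s n)) atTop (𝓝 1) :=
    tendsto_of_tendsto_of_tendsto_of_le_of_le' (by simpa using hu.const_sub 1)
      tendsto_const_nhds h (Eventually.of_forall fun _ => measureReal_le_one)
  have h := (ENNReal.tendsto_ofReal hreal).congr fun n => ofReal_measureReal
  rwa [ENNReal.ofReal_one] at h

section Bernoulli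

variable {r : ℝ}

lemma isProbabilityMeasure_bern (hr : r ∈ Set.Icc 0 1) : IsProbabilityMeasure (bern r) :=
  ⟨by simp [bern, ← ENNReal.ofReal_add hr.1 (sub_nonneg.2 hr.2)]⟩

lemma integral_bern (hr : r ∈ Set.Icc 0 1) (f : Bool → ℝ) :
    ∫ b, f b ∂bern r = r * f true + (1 - r) * f false := by
  have := isProbabilityMeasure_bern hr
  rw [integral_fintype Integrable.of_finite]
  simp [bern, measureReal_def, ENNReal.toReal_ofReal hr.1,
    ENNReal.toReal_ofReal (sub_nonneg.2 hr.2)]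

end Bernoulli

lemma vmin_le {M : ℕ} (f : Fin M → ℝ) (m : Fin M) : vmin f ≤ f m :=
  csInf_le (Set.finite_range f).bddBelow ⟨m, rfl⟩

lemma le_vmax {M : ℕ} (f : Fin M → ℝ) (m : Fin M) : f m ≤ vmax f :=
  le_csSup (Set.finite_range f).bddAbove ⟨m, rfl⟩

lemma exists_vmin_eq {M : ℕ} (hM : 0 < M) (f : Fin M → ℝ) : ∃ m, vmin f = f m := by
  have : Nonempty (Fin M) := ⟨⟨0, hM⟩⟩
  obtain ⟨m, hm⟩ := (Set.range_nonempty f).csInf_mem (Set.finite_range f)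
  exact ⟨m, hm.symm⟩

lemma two_mul_mul_exp_le_two_div {N g : ℝ} (hN : 1 < N) (hg : 256 * log N ≤ g) :
    2 * N * exp (-(g * ((log N / g) ^ ((1 : ℝ) / 4)) ^ 2 / 4)) ≤ 2 / N := by
  set L := log N
  have hL : 0 < L := log_pos hN
  have hg0 : 0 < g := by linarith
  have hsq : ((L / g) ^ ((1 : ℝ) / 4)) ^ 2 = √(L / g) := by
    rw [← rpow_natCast, ← rpow_mul (by positivity), Real.sqrt_eq_rpow]
    norm_num
  have hgL : g * √(L / g) = √(g * L) := by
    rw [← Real.sqrt_sq hg0.le, ← Real.sqrt_mul (sq_nonneg g), Real.sqrt_sq hg0.le]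
    congr 1
    field_simp
  have hexponent : 8 * L ≤ √(g * L) := Real.le_sqrt_of_sq_le (by nlinarith)
  calc 2 * N * exp (-(g * ((L / g) ^ ((1 : ℝ) / 4)) ^ 2 / 4))
      ≤ 2 * N * exp (-(L + L)) := by
        rw [hsq, hgL]
        gcongr
        linarith
    _ = 2 / N := by
        rw [exp_neg, exp_add, exp_log (by linarith)]
        field_simp

lemma rpow_quarter_le_quarter {x : ℝ} (hx0 : 0 ≤ x) (hx : 256 * x ≤ 1) :
    x ^ ((1 : ℝ) / 4) ≤ 1 / 4 := by
  calc x ^ ((1 : ℝ) / 4) ≤ ((1 / 4 : ℝ) ^ (4 : ℝ)) ^ ((1 : ℝ) / 4) :=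
        rpow_le_rpow hx0 (by norm_num; linarith) (by norm_num)
    _ = 1 / 4 := by rw [← rpow_mul (by norm_num)]; norm_num

section FixedSize

variable {M n : ℕ} {p : Fin M → ℝ} {q : ℝ}

lemma edgeProb_mk (v w : Vtx M n) :
    edgeProb M n p q s(v, w) = if v.1 = w.1 then p v.1 else q := rfl

lemma edgeProb_mem_Icc (hp : ∀ m, p m ∈ Set.Icc 0 1) (hq : q ∈ Set.Icc 0 1)
    (e : Sym2 (Vtx M n)) : edgeProb M n p q e ∈ Set.Icc 0 1 := by
  induction e using Sym2.ind with
  | _ v w => rw [edgeProb_mk]; split_ifs <;> simp_all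

lemma isProbabilityMeasure_sbmMeasure (hp : ∀ m, p m ∈ Set.Icc 0 1) (hq : q ∈ Set.Icc 0 1) :
    IsProbabilityMeasure (sbmMeasure M n p q) :=
  have := fun e => isProbabilityMeasure_bern (edgeProb_mem_Icc (n := n) hp hq e)
  inferInstanceAs (IsProbabilityMeasure (Measure.pi _))

lemma sum_edgeProb (v : Vtx M n) : ∑ w, edgeProb M n p q s(v, w) = gam M n p q v.1 := by
  have hsplit : ∀ m, (if v.1 = m then p v.1 else q) = q + if v.1 = m then p v.1 - q else 0 := by
    intro m; split_ifs <;> ring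
  simp only [Fintype.sum_prod_type, edgeProb_mk]
  simp only [hsplit, Finset.sum_add_distrib]
  simp [gam]
  ring

lemma mgf_deg (hp : ∀ m, p m ∈ Set.Icc 0 1) (hq : q ∈ Set.Icc 0 1) (v : Vtx M n) (t : ℝ) :
    mgf (fun ω => deg ω v) (sbmMeasure M n p q) t =
      ∏ w, (1 + edgeProb M n p q s(v, w) * (exp t - 1)) := by
  have := fun e => isProbabilityMeasure_bern (edgeProb_mem_Icc (n := n) hp hq e)
  set X : Bool → ℝ := fun b => if b then 1 else 0
  have hind : iIndepFun (fun w (ω : Sym2 (Vtx M n) → Bool) => X (ω s(v, w)))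
      (sbmMeasure M n p q) :=
    (iIndepFun_pi (X := fun _ => X) fun _ => measurable_of_finite _ |>.aemeasurable).precomp
      fun _ _ => Sym2.congr_right.1
  have hdeg : (fun ω => deg ω v) = ∑ w, fun ω : Sym2 (Vtx M n) → Bool => X (ω s(v, w)) := by
    ext ω; simp [deg, adj, X]
  rw [hdeg, hind.mgf_sum fun _ => measurable_of_finite _]
  refine Finset.prod_congr rfl fun w _ => ?_
  change mgf (X ∘ fun ω : Sym2 (Vtx M n) → Bool => ω s(v, w)) _ t = _
  rw [← mgf_map (X := X) (measurable_pi_apply _).aemeasurable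
    (measurable_of_finite _).aestronglyMeasurable, sbmMeasure,
    (measurePreserving_eval _ _).map_eq, mgf, integral_bern (edgeProb_mem_Icc hp hq _)]
  simp [X]
  ring

lemma mgf_deg_le (hp : ∀ m, p m ∈ Set.Icc 0 1) (hq : q ∈ Set.Icc 0 1) (v : Vtx M n) (t : ℝ) :
    mgf (fun ω => deg ω v) (sbmMeasure M n p q) t ≤ exp (gam M n p q v.1 * (exp t - 1)) := by
  rw [mgf_deg hp hq, ← sum_edgeProb, Finset.sum_mul, exp_sum]
  refine Finset.prod_le_prod (fun w _ => ?_) fun w _ => ?_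
  · have := edgeProb_mem_Icc (n := n) hp hq s(v, w)
    nlinarith [this.1, this.2, exp_pos t]
  · linarith [add_one_le_exp (edgeProb M n p q s(v, w) * (exp t - 1))]

def DegreesConcentrated (M n : ℕ) (p : Fin M → ℝ) (q δ : ℝ) (ω : Sym2 (Vtx M n) → Bool) :
    Prop :=
  ∀ v, |deg ω v - gam M n p q v.1| ≤ δ * gam M n p q v.1

lemma measureReal_not_degreesConcentrated_le (hp : ∀ m, p m ∈ Set.Icc 0 1)
    (hq : q ∈ Set.Icc 0 1) {g δ : ℝ} (hg0 : 0 ≤ g) (hg : ∀ m, g ≤ gam M n p q m)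
    (hδ0 : 0 ≤ δ) (hδ2 : δ ≤ 2) :
    (sbmMeasure M n p q).real {ω | ¬ DegreesConcentrated M n p q δ ω} ≤
      M * n * (2 * exp (-(g * δ ^ 2 / 4))) := by
  have := isProbabilityMeasure_sbmMeasure (n := n) hp hq
  have hunion : {ω | ¬ DegreesConcentrated M n p q δ ω} =
      ⋃ v, {ω | δ * gam M n p q v.1 < |deg ω v - gam M n p q v.1|} := by
    ext ω; simp [DegreesConcentrated]
  rw [hunion]
  calc _ ≤ ∑ v, (sbmMeasure M n p q).real
          {ω | δ * gam M n p q v.1 < |deg ω v - gam M n p q v.1|} :=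
        measureReal_iUnion_fintype_le _
    _ ≤ ∑ _v : Vtx M n, 2 * exp (-(g * δ ^ 2 / 4)) := by
        refine Finset.sum_le_sum fun v _ => (measureReal_abs_sub_gt_le_of_mgf_le
          (hg0.trans (hg v.1)) hδ0 hδ2 (fun _ => Integrable.of_finite)
          (mgf_deg_le hp hq v)).trans ?_
        gcongr
        exact hg v.1
    _ = M * n * (2 * exp (-(g * δ ^ 2 / 4))) := by simp

lemma abs_sqrt_mul_sub_sqrt_mul_le {a b x y δ : ℝ} (hx : 0 ≤ x) (hy : 0 ≤ y) (hδ0 : 0 ≤ δ)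
    (hδ1 : δ ≤ 1) (ha : |a - x| ≤ δ * x) (hb : |b - y| ≤ δ * y) :
    |√(a * b) - √(x * y)| ≤ δ * √(x * y) := by
  obtain ⟨ha1, ha2⟩ := abs_le.1 ha
  obtain ⟨hb1, hb2⟩ := abs_le.1 hb
  have hscale : ∀ c : ℝ, 0 ≤ c → √(c ^ 2 * (x * y)) = c * √(x * y) := fun c hc => by
    rw [Real.sqrt_mul (sq_nonneg c), Real.sqrt_sq hc]
  have ha1' : (1 - δ) * x ≤ a := by linarith
  have hb1' : (1 - δ) * y ≤ b := by linarith
  have h1δ : 0 ≤ 1 - δ := by linarith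
  have hlow : (1 - δ) * √(x * y) ≤ √(a * b) := by
    rw [← hscale _ h1δ]
    refine Real.sqrt_le_sqrt ?_
    calc (1 - δ) ^ 2 * (x * y) = ((1 - δ) * x) * ((1 - δ) * y) := by ring
      _ ≤ a * b :=
          mul_le_mul ha1' hb1' (by positivity) ((by positivity : 0 ≤ (1 - δ) * x).trans ha1')
  have hup : √(a * b) ≤ (1 + δ) * √(x * y) := by
    rw [← hscale _ (by linarith)]
    refine Real.sqrt_le_sqrt ?_
    calc a * b ≤ ((1 + δ) * x) * ((1 + δ) * y) :=
          mul_le_mul (by linarith) (by linarith) ((by positivity : 0 ≤ (1 - δ) * y).trans hb1')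
            (by positivity)
      _ = (1 + δ) ^ 2 * (x * y) := by ring
  rw [abs_le]
  constructor <;> linarith

lemma abs_inv_sub_inv_le {u s δ : ℝ} (hs : 0 < s) (hδ : δ < 1) (h : |u - s| ≤ δ * s) :
    |u⁻¹ - s⁻¹| ≤ δ / (1 - δ) * s⁻¹ := by
  have hu : (1 - δ) * s ≤ u := by linarith [(abs_le.1 h).1]
  have hu0 : 0 < u := lt_of_lt_of_le (mul_pos (by linarith) hs) hu
  have hδ0 : 0 ≤ δ := nonneg_of_mul_nonneg_left ((abs_nonneg _).trans h) hs
  rw [inv_sub_inv hu0.ne' hs.ne', abs_div, abs_sub_comm, abs_of_pos (mul_pos hu0 hs),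
    div_le_iff₀ (mul_pos hu0 hs)]
  calc |u - s| ≤ δ * s := h
    _ ≤ δ / (1 - δ) * s⁻¹ * (u * s) := by
        rw [div_mul_eq_mul_div, div_mul_eq_mul_div, le_div_iff₀ (by linarith)]
        field_simp
        nlinarith [mul_le_mul_of_nonneg_left hu hδ0]

lemma adj_nonneg (ω : Sym2 (Vtx M n) → Bool) (v w : Vtx M n) : 0 ≤ adj ω v w := by
  rw [adj, of_apply]; split_ifs <;> norm_num

lemma abs_Bmat_sub_Aprime_apply_le {δ : ℝ} {ω : Sym2 (Vtx M n) → Bool}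
    (hg : 0 < gmin M n p q) (hδ0 : 0 ≤ δ) (hδ1 : δ < 1) (hω : DegreesConcentrated M n p q δ ω)
    (v w : Vtx M n) :
    |(Bmat ω - Aprime M n p q ω) v w| ≤
      adj ω v w * (δ / (1 - δ) * (√(gam M n p q v.1 * gam M n p q w.1))⁻¹) := by
  have hγ : ∀ m, 0 < gam M n p q m := fun m => hg.trans_le (vmin_le _ m)
  have hadj := adj_nonneg ω v w
  rw [Matrix.sub_apply, Bmat, Aprime, of_apply, of_apply, div_eq_mul_inv, div_eq_mul_inv, ← mul_sub,
    abs_mul, abs_of_nonneg hadj]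
  exact mul_le_mul_of_nonneg_left (abs_inv_sub_inv_le (Real.sqrt_pos.2 (mul_pos (hγ _) (hγ _)))
    hδ1 (abs_sqrt_mul_sub_sqrt_mul_le (hγ _).le (hγ _).le hδ0 hδ1.le (hω v) (hω w))) hadj

lemma sum_abs_Bmat_sub_Aprime_le {δ : ℝ} {ω : Sym2 (Vtx M n) → Bool}
    (hg : 0 < gmin M n p q) (hδ0 : 0 ≤ δ) (hδ1 : δ < 1) (hω : DegreesConcentrated M n p q δ ω)
    (v : Vtx M n) :
    ∑ w, |(Bmat ω - Aprime M n p q ω) v w| ≤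
      δ * (1 + δ) / (1 - δ) * √(gmax M n p q / gmin M n p q) := by
  set γ := gam M n p q v.1
  have hγ : 0 < γ := hg.trans_le (vmin_le _ _)
  have hc : 0 ≤ δ / (1 - δ) := div_nonneg hδ0 (by linarith)
  calc ∑ w, |(Bmat ω - Aprime M n p q ω) v w|
      ≤ ∑ w, adj ω v w * (δ / (1 - δ) * (√(γ * gmin M n p q))⁻¹) := by
        refine Finset.sum_le_sum fun w _ =>
          (abs_Bmat_sub_Aprime_apply_le hg hδ0 hδ1 hω v w).trans ?_
        have := adj_nonneg ω v w
        gcongr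
        exact vmin_le _ _
    _ = deg ω v * (δ / (1 - δ) * (√(γ * gmin M n p q))⁻¹) := by rw [← Finset.sum_mul]; rfl
    _ ≤ (1 + δ) * γ * (δ / (1 - δ) * (√(γ * gmin M n p q))⁻¹) := by
        gcongr
        linarith [(abs_le.1 (hω v)).2]
    _ = δ * (1 + δ) / (1 - δ) * √(γ / gmin M n p q) := by
        rw [Real.sqrt_mul hγ.le, Real.sqrt_div' _ hg.le]
        field_simp
        rw [Real.sq_sqrt hγ.le]
    _ ≤ δ * (1 + δ) / (1 - δ) * √(gmax M n p q / gmin M n p q) := by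
        have : 0 ≤ δ * (1 + δ) / (1 - δ) := div_nonneg (by positivity) (by linarith)
        gcongr
        exact le_vmax (gam M n p q) v.1

lemma rowSum_bound_of_degreesConcentrated {δ ε : ℝ} {ω : Sym2 (Vtx M n) → Bool}
    (hg : 0 < gmin M n p q) (hδ0 : 0 ≤ δ) (hδ : δ ≤ 1 / 4) (hε : 0 ≤ ε)
    (hω : DegreesConcentrated M n p q δ ω) :
    (∀ v, 0 < deg ω v) ∧
      ∀ v, ∑ w, |(Bmat ω - Aprime M n p q ω) v w| ≤
        (√3 + ε) * δ * (gmax M n p q / gmin M n p q) ^ ((1 : ℝ) / 2) := by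
  refine ⟨fun v => ?_, fun v => ?_⟩
  · have hγ : 0 < gam M n p q v.1 := hg.trans_le (vmin_le _ _)
    nlinarith [(abs_le.1 (hω v)).1]
  · rw [← Real.sqrt_eq_rpow]
    refine (sum_abs_Bmat_sub_Aprime_le hg hδ0 (by linarith) hω v).trans ?_
    have hsqrt3 : (5 / 3 : ℝ) ≤ √3 := by
      rw [Real.le_sqrt (by norm_num) (by norm_num)]; norm_num
    have hratio : 1 + δ ≤ (√3 + ε) * (1 - δ) := by nlinarith
    gcongr
    rw [div_le_iff₀ (by linarith)]
    linarith [mul_le_mul_of_nonneg_left hratio hδ0]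

lemma one_sub_two_div_le_measureReal (hp : ∀ m, p m ∈ Set.Icc 0 1) (hq : q ∈ Set.Icc 0 1)
    {ε : ℝ} (hε : 0 ≤ ε) (hN : 1 < (M : ℝ) * n) (hg : 256 * log (M * n) ≤ gmin M n p q) :
    1 - 2 / (M * n) ≤ (sbmMeasure M n p q).real
      {ω | (∀ v, 0 < deg ω v) ∧
        ∀ v, ∑ w, |(Bmat ω - Aprime M n p q ω) v w| ≤
          (√3 + ε) * (log (M * n) / gmin M n p q) ^ ((1 : ℝ) / 4) *
            (gmax M n p q / gmin M n p q) ^ ((1 : ℝ) / 2)} := by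
  have := isProbabilityMeasure_sbmMeasure (n := n) hp hq
  have hL : 0 < log (M * n) := log_pos hN
  have hg0 : 0 < gmin M n p q := by linarith
  set δ := (log (M * n) / gmin M n p q) ^ ((1 : ℝ) / 4)
  have hδ0 : 0 ≤ δ := by positivity
  have hδ : δ ≤ 1 / 4 := rpow_quarter_le_quarter (by positivity) (by
    rw [← mul_div_assoc, div_le_one hg0]; exact hg)
  set E := {ω | (∀ v, 0 < deg ω v) ∧
    ∀ v, ∑ w, |(Bmat ω - Aprime M n p q ω) v w| ≤
      (√3 + ε) * δ * (gmax M n p q / gmin M n p q) ^ ((1 : ℝ) / 2)}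
  have hbad : (sbmMeasure M n p q).real Eᶜ ≤ 2 / (M * n) := calc
    _ ≤ (sbmMeasure M n p q).real {ω | ¬ DegreesConcentrated M n p q δ ω} :=
        measureReal_mono fun ω (hω : ω ∈ Eᶜ) hconc =>
          hω (rowSum_bound_of_degreesConcentrated hg0 hδ0 hδ hε hconc)
    _ ≤ M * n * (2 * exp (-(gmin M n p q * δ ^ 2 / 4))) :=
        measureReal_not_degreesConcentrated_le hp hq hg0.le (vmin_le _) hδ0 (by linarith)
    _ ≤ 2 / (M * n) := by linarith [two_mul_mul_exp_le_two_div hN hg]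
  linarith [probReal_compl_eq_one_sub (μ := sbmMeasure M n p q) (s := E) .of_discrete]

end FixedSize

section Asymptotics

variable {M : ℕ} {p : ℕ → Fin M → ℝ} {q : ℕ → ℝ}

lemma gam_pos_of_params (hM : 0 < M) (hpar : params M p q) {n : ℕ} (hn : 0 < n) (m : Fin M) :
    0 < gam M n (p n) (q n) m := by
  have : (0 : ℝ) ≤ M - 1 := by rw [sub_nonneg]; exact_mod_cast hM
  have := ((hpar n).1 m).1
  have := (hpar n).2.1.1
  unfold gam
  positivity

lemma gmin_pos_of_params (hM : 0 < M) (hpar : params M p q) {n : ℕ} (hn : 0 < n) :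
    0 < gmin M n (p n) (q n) := by
  obtain ⟨m, hm⟩ := exists_vmin_eq hM (gam M n (p n) (q n))
  exact (gam_pos_of_params hM hpar hn m).trans_eq hm.symm

lemma tendsto_log_pow_four_div_gmin (hM : 0 < M) (hpar : params M p q) (hC1 : condC1 M p q) :
    Tendsto (fun n : ℕ => log (M * n) ^ 4 / gmin M n (p n) (q n)) atTop (𝓝 0) := by
  set ratio := fun n : ℕ => gmax M n (p n) (q n) / gmin M n (p n) (q n)
  have hC1' : ∀ m, Tendsto (fun n : ℕ => log (M * n) ^ 4 / gam M n (p n) (q n) m * ratio n ^ 2)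
      atTop (𝓝 0) := fun m => (hC1 m).congr fun n => by
    rw [show (M * n : ℝ) * p n m + (M * n : ℝ) * ((M : ℝ) - 1) * q n =
      M * gam M n (p n) (q n) m by unfold gam; ring, mul_div_mul_left _ _ (by positivity)]
  refine squeeze_zero' ?_ ?_ (by simpa using tendsto_finsetSum Finset.univ fun m _ => hC1' m)
  · filter_upwards [eventually_gt_atTop 0] with n hn
    exact div_nonneg (by positivity) (gmin_pos_of_params hM hpar hn).le
  · filter_upwards [eventually_gt_atTop 0] with n hn
    obtain ⟨m, hm⟩ := exists_vmin_eq hM (gam M n (p n) (q n))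
    have hγ := fun m => gam_pos_of_params hM hpar hn m
    have hratio : 1 ≤ ratio n := (one_le_div (gmin_pos_of_params hM hpar hn)).2
      ((vmin_le _ m).trans (le_vmax _ m))
    calc log (M * n) ^ 4 / gmin M n (p n) (q n)
        ≤ log (M * n) ^ 4 / gam M n (p n) (q n) m * ratio n ^ 2 := by
          rw [gmin, hm]
          exact le_mul_of_one_le_right (div_nonneg (by positivity) (hγ m).le)
            (one_le_pow₀ hratio)
      _ ≤ ∑ m, log (M * n) ^ 4 / gam M n (p n) (q n) m * ratio n ^ 2 :=
          Finset.single_le_sum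
            (f := fun m => log (M * n) ^ 4 / gam M n (p n) (q n) m * ratio n ^ 2)
            (fun m _ => mul_nonneg (div_nonneg (by positivity) (hγ m).le) (sq_nonneg _))
            (Finset.mem_univ m)

lemma eventually_one_lt_and_log_le_gmin (hM : 0 < M) (hpar : params M p q)
    (hC1 : condC1 M p q) :
    ∀ᶠ n : ℕ in atTop, 1 < (M : ℝ) * n ∧ 256 * log (M * n) ≤ gmin M n (p n) (q n) := by
  have hN : Tendsto (fun n : ℕ => (M : ℝ) * n) atTop atTop :=
    tendsto_natCast_atTop_atTop.const_mul_atTop (by positivity)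
  filter_upwards [hN.eventually_gt_atTop 1, (tendsto_log_atTop.comp hN).eventually_ge_atTop 1,
    (tendsto_log_pow_four_div_gmin hM hpar hC1).eventually
      (gt_mem_nhds (by norm_num : (0 : ℝ) < 1 / 256)),
    eventually_gt_atTop 0] with n hN1 hL hsmall hn
  rw [div_lt_iff₀ (gmin_pos_of_params hM hpar hn)] at hsmall
  exact ⟨hN1, by nlinarith [le_self_pow₀ (show 1 ≤ log (M * n) from hL) (by norm_num : 4 ≠ 0)]⟩

end Asymptotics

/-- Row-sum norm bound for `R = B - A'`: under (C1), a.a.s. all degrees are positive and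
`‖R‖_∞ ≤ (√3 + ε)·(log N/γ_min)^{1/4}·(γ_max/γ_min)^{1/2}`. -/
theorem statement4 (M : ℕ) (hM : 2 ≤ M)
    (p : ℕ → Fin M → ℝ) (q : ℕ → ℝ) (hpar : params M p q)
    (hC1 : condC1 M p q) :
    ∀ ε : ℝ, 0 < ε →
      Tendsto (fun n : ℕ =>
        sbmMeasure M n (p n) (q n)
          {ω | (∀ v, 0 < deg ω v) ∧
            ∀ v, ∑ w, |(Bmat ω - Aprime M n (p n) (q n) ω) v w| ≤
              (Real.sqrt 3 + ε) *
                (Real.log (M * n) / gmin M n (p n) (q n)) ^ ((1 : ℝ)/4) *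
                (gmax M n (p n) (q n) / gmin M n (p n) (q n)) ^ ((1 : ℝ)/2)})
        atTop (𝓝 1) := by
  intro ε hε
  have hp : ∀ n m, p n m ∈ Set.Icc 0 1 := fun n m => ⟨((hpar n).1 m).1.le, ((hpar n).1 m).2.le⟩
  have hq : ∀ n, q n ∈ Set.Icc 0 1 := fun n => ⟨(hpar n).2.1.1.le, (hpar n).2.1.2.le⟩
  refine tendsto_measure_of_one_sub_le (fun n => isProbabilityMeasure_sbmMeasure (hp n) (hq n))
    (u := fun n : ℕ => 2 / ((M : ℝ) * n)) (tendsto_const_nhds.div_atTop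
      (tendsto_natCast_atTop_atTop.const_mul_atTop (by positivity : (0 : ℝ) < M)))
    ?_
  filter_upwards [eventually_one_lt_and_log_le_gmin (by omega) hpar hC1] with n hn
  exact one_sub_two_div_le_measureReal (hp n) (hq n) hε.le hn.1 hn.2

end SBM
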